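/- arXiv:1910.13870 — 2 statements merged into one kernel-verified Lean document; each statement's English description precedes it below -/
import Mathlib

section
/- Let u_h be a mesh function and E ⊆ interior(conv(N_h)). Then ∂_h u_h(E) ⊆ ∂Γ(u_h)(E) := ⋃_{x∈E} ∂Γ(u_h)(x), the set ∂Γ(u_h)(E) \ ∂_h u_h(E) has d-dimensional Lebesgue measure zero, and consequently ω(R,u_h,E) = ω(R,Γ(u_h),E) for every locally integrable R : ℝ^d → [0,∞). -/
open Set MeasureTheory Filter Topology

noncomputable section

abbrev Euc (d : ℕ) := EuclideanSpace ℝ (Fin d)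

/-- Subdifferential of `v` at `x` relative to the set `C`. -/
def subdiff {d : ℕ} (C : Set (Euc d)) (v : Euc d → ℝ) (x : Euc d) : Set (Euc d) :=
  {p | ∀ y ∈ C, v x + (inner ℝ p (y - x) : ℝ) ≤ v y}

/-- `⋃ x ∈ S, subdiff C v x`. -/
def subdiffSet {d : ℕ} (C : Set (Euc d)) (v : Euc d → ℝ) (S : Set (Euc d)) : Set (Euc d) :=
  ⋃ x ∈ S, subdiff C v x

/-- The convex extension `ũ` of `u : Ω → ℝ` (may take the value `+∞`, hence `EReal`). -/
def extFun {d : ℕ} (Ω : Set (Euc d)) (u : Euc d → ℝ) (x : Euc d) : EReal :=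
  ⨆ y ∈ Ω, ⨆ q ∈ subdiff Ω u y, ((u y + (inner ℝ q (x - y) : ℝ) : ℝ) : EReal)

/-- `χ_u(x)`: the subdifferential of the extension `ũ` at `x`. -/
def chiSub {d : ℕ} (Ω : Set (Euc d)) (u : Euc d → ℝ) (x : Euc d) : Set (Euc d) :=
  {p | ∀ z : Euc d, extFun Ω u x + (((inner ℝ p (z - x) : ℝ) : ℝ) : EReal) ≤ extFun Ω u z}

def chiSubSet {d : ℕ} (Ω : Set (Euc d)) (u : Euc d → ℝ) (S : Set (Euc d)) : Set (Euc d) :=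
  ⋃ x ∈ S, chiSub Ω u x

/-- The lattice `hℤ^d`. -/
def latt (d : ℕ) (h : ℝ) : Set (Euc d) := {x | ∀ i, ∃ m : ℤ, x i = m * h}

/-- `Ω_h = Ω ∩ hℤ^d`. -/
def meshΩ {d : ℕ} (Ω : Set (Euc d)) (h : ℝ) : Set (Euc d) := Ω ∩ latt d h

/-- An integer direction `e ∈ ℤ^d` as a vector of `ℝ^d`. -/
def intVec {d : ℕ} (e : Fin d → ℤ) : Euc d :=
  (EuclideanSpace.equiv (Fin d) ℝ).symm (fun i => (e i : ℝ))

/-- `h^e_x = sup { r h : r ∈ [0,1], x + r h e ∈ closure Ω }`. -/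
def hev {d : ℕ} (Ω : Set (Euc d)) (h : ℝ) (x : Euc d) (e : Fin d → ℤ) : ℝ :=
  sSup {t | ∃ r ∈ Icc (0:ℝ) 1, t = r * h ∧ x + (r * h) • intVec e ∈ closure Ω}

/-- The boundary nodes `∂Ω_h` for the direction set `V`. -/
def meshBd {d : ℕ} (Ω : Set (Euc d)) (h : ℝ) (V : Set (Fin d → ℤ)) : Set (Euc d) :=
  {x ∈ frontier Ω | ∃ y ∈ meshΩ Ω h, ∃ e ∈ V, x = y + hev Ω h y e • intVec e}

/-- The convex envelope of `u` with constraints on `N`: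
`Γ(u)(x) = sup {L x : L affine, L ≤ u on N}`. -/
def convEnv {d : ℕ} (N : Set (Euc d)) (u : Euc d → ℝ) (x : Euc d) : ℝ :=
  sSup {t | ∃ (p : Euc d) (c : ℝ),
    (∀ y ∈ N, (inner ℝ p y : ℝ) + c ≤ u y) ∧ t = (inner ℝ p x : ℝ) + c}

/-- The second difference operator `Δ_e u_h (x)`. -/
def deltaE {d : ℕ} (Ω : Set (Euc d)) (h : ℝ) (u : Euc d → ℝ) (e : Fin d → ℤ)
    (x : Euc d) : ℝ :=
  2 / (hev Ω h x e + hev Ω h x (-e)) *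
    ((u (x + hev Ω h x e • intVec e) - u x) / hev Ω h x e +
     (u (x + hev Ω h x (-e) • intVec (-e)) - u x) / hev Ω h x (-e))

/-- Discrete convexity with the full set of directions `e ∈ ℤ^d \ {0}`. -/
def DiscConvex {d : ℕ} (Ω : Set (Euc d)) (h : ℝ) (u : Euc d → ℝ) : Prop :=
  ∀ x ∈ meshΩ Ω h, ∀ e : Fin d → ℤ, e ≠ 0 → 0 ≤ deltaE Ω h u e x

/-! A supporting hyperplane of `Γ = Γ(u_h)` with slope `p` at `x` lies below `u_h` on the finite
node set, and it touches the graph of `u_h` at some node `y`, since otherwise it could be raised,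
contradicting the maximality of `Γ x`. There `Γ y = u_h y`, so `p ∈ ∂_h u_h(y)`. Hence a slope in
`∂Γ(E)` but not in `∂_h u_h(E)` supports `Γ` at two distinct points `x ≠ y`. Both are gradients
of the Lipschitz function `q ↦ sup_{z ∈ conv N_h} (⟪q, z⟫ - Γ z)` at that slope if it is
differentiable there, so such slopes form a null set by Rademacher's theorem. -/

open scoped RealInnerProductSpace NNReal

section LegendreTransform

variable {d : ℕ} {K : Set (Euc d)} {Γ : Euc d → ℝ}

theorem fderiv_eq_innerSL_of_forall_le {E : Type*} [NormedAddCommGroup E]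
    [InnerProductSpace ℝ E] {g : E → ℝ} {q x : E} {c : ℝ} (hle : ∀ q', ⟪q', x⟫ - c ≤ g q')
    (heq : g q = ⟪q, x⟫ - c) (hg : DifferentiableAt ℝ g q) :
    fderiv ℝ g q = innerSL ℝ x := by
  have hmin : IsLocalMin (fun q' => g q' - innerSL ℝ x q') q :=
    Filter.Eventually.of_forall fun q' => by
      simp only [innerSL_apply_apply, real_inner_comm q', real_inner_comm q]
      linarith [hle q']
  exact sub_eq_zero.mp (hmin.hasFDerivAt_eq_zero (hg.hasFDerivAt.sub (innerSL ℝ x).hasFDerivAt))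

def legendreOn (K : Set (Euc d)) (Γ : Euc d → ℝ) (q : Euc d) : ℝ :=
  sSup ((fun z => ⟪q, z⟫ - Γ z) '' K)

variable {R : ℝ≥0} (hR : ∀ z ∈ K, ‖z‖ ≤ R) (hΓ : BddBelow (Γ '' K))
include hR hΓ

theorem le_legendreOn {q z : Euc d} (hz : z ∈ K) : ⟪q, z⟫ - Γ z ≤ legendreOn K Γ q := by
  obtain ⟨m, hm⟩ := hΓ
  refine le_csSup ⟨‖q‖ * R - m, ?_⟩ ⟨z, hz, rfl⟩
  rintro _ ⟨w, hw, rfl⟩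
  have hqw : ⟪q, w⟫ ≤ ‖q‖ * R :=
    (real_inner_le_norm q w).trans (mul_le_mul_of_nonneg_left (hR w hw) (norm_nonneg q))
  linarith [hm ⟨w, hw, rfl⟩]

theorem lipschitzWith_legendreOn : LipschitzWith R (legendreOn K Γ) := by
  refine LipschitzWith.of_le_add_mul R fun q q' => ?_
  rcases K.eq_empty_or_nonempty with rfl | hK
  · simp only [legendreOn, image_empty, le_add_iff_nonneg_right]
    positivity
  refine csSup_le (hK.image _) ?_
  rintro _ ⟨z, hz, rfl⟩
  have hinner : ⟪q - q', z⟫ ≤ R * dist q q' := by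
    rw [dist_eq_norm, mul_comm]
    exact (real_inner_le_norm _ _).trans (mul_le_mul_of_nonneg_left (hR z hz) (norm_nonneg _))
  calc ⟪q, z⟫ - Γ z = (⟪q', z⟫ - Γ z) + ⟪q - q', z⟫ := by rw [inner_sub_left]; ring
    _ ≤ legendreOn K Γ q' + R * dist q q' := add_le_add (le_legendreOn hR hΓ hz) hinner

theorem legendreOn_eq_of_mem_subdiff {q x : Euc d} (hx : x ∈ K) (hq : q ∈ subdiff K Γ x) :
    legendreOn K Γ q = ⟪q, x⟫ - Γ x := by
  refine le_antisymm (csSup_le ⟨_, x, hx, rfl⟩ ?_) (le_legendreOn hR hΓ hx)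
  rintro _ ⟨z, hz, rfl⟩
  have hqz := hq z hz
  rw [inner_sub_right] at hqz
  linarith

theorem eq_of_mem_subdiff_of_differentiableAt {q x y : Euc d} (hx : x ∈ K) (hy : y ∈ K)
    (hqx : q ∈ subdiff K Γ x) (hqy : q ∈ subdiff K Γ y)
    (hdiff : DifferentiableAt ℝ (legendreOn K Γ) q) : x = y := by
  have hgrad : ∀ w ∈ K, q ∈ subdiff K Γ w → fderiv ℝ (legendreOn K Γ) q = innerSL ℝ w :=
    fun w hw hqw => fderiv_eq_innerSL_of_forall_le (fun _ => le_legendreOn hR hΓ hw)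
      (legendreOn_eq_of_mem_subdiff hR hΓ hw hqw) hdiff
  exact innerSL_inj.mp ((hgrad x hx hqx).symm.trans (hgrad y hy hqy))

end LegendreTransform

theorem volume_setOf_mem_subdiff_of_ne {d : ℕ} {K : Set (Euc d)} {Γ : Euc d → ℝ}
    (hK : Bornology.IsBounded K) (hΓ : BddBelow (Γ '' K)) :
    volume {q | ∃ x ∈ K, ∃ y ∈ K, x ≠ y ∧ q ∈ subdiff K Γ x ∧ q ∈ subdiff K Γ y} = 0 := by
  obtain ⟨R, hR0, hR⟩ := hK.exists_pos_norm_le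
  lift R to ℝ≥0 using hR0.le
  refine measure_mono_null ?_ (ae_iff.mp (lipschitzWith_legendreOn hR hΓ).ae_differentiableAt)
  rintro q ⟨x, hx, y, hy, hxy, hqx, hqy⟩ hdiff
  exact hxy (eq_of_mem_subdiff_of_differentiableAt hR hΓ hx hy hqx hqy hdiff)

section ConvexEnvelope

variable {d : ℕ} {N : Set (Euc d)} {u : Euc d → ℝ} (hN : N.Finite)
include hN

theorem le_sSup_image_of_mem_convexHull {p x : Euc d} {c : ℝ}
    (hpc : ∀ y ∈ N, ⟪p, y⟫ + c ≤ u y) (hx : x ∈ convexHull ℝ N) :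
    ⟪p, x⟫ + c ≤ sSup (u '' N) := by
  have hsub : N ⊆ {z | ⟪p, z⟫ ≤ sSup (u '' N) - c} := fun y hy =>
    (le_sub_iff_add_le.mpr ((hpc y hy).trans (le_csSup (hN.image u).bddAbove ⟨y, hy, rfl⟩)))
  exact le_sub_iff_add_le.mp
    (convexHull_min hsub (convex_halfSpace_le (innerₛₗ ℝ p).isLinear _) hx)

theorem le_convEnv {a : ℝ} {p x z : Euc d} (hL : ∀ y ∈ N, a + ⟪p, y - x⟫ ≤ u y)
    (hz : z ∈ convexHull ℝ N) : a + ⟪p, z - x⟫ ≤ convEnv N u z := by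
  have hpc : ∀ y ∈ N, ⟪p, y⟫ + (a - ⟪p, x⟫) ≤ u y := fun y hy => by
    linarith [hL y hy, inner_sub_right (𝕜 := ℝ) p y x]
  have hbdd : BddAbove {t | ∃ (p : Euc d) (c : ℝ),
      (∀ y ∈ N, ⟪p, y⟫ + c ≤ u y) ∧ t = ⟪p, z⟫ + c} := by
    refine ⟨sSup (u '' N), ?_⟩
    rintro _ ⟨p', c', hpc', rfl⟩
    exact le_sSup_image_of_mem_convexHull hN hpc' hz
  calc a + ⟪p, z - x⟫ = ⟪p, z⟫ + (a - ⟪p, x⟫) := by rw [inner_sub_right]; ring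
    _ ≤ convEnv N u z := le_csSup hbdd ⟨p, _, hpc, rfl⟩

theorem convEnv_le {y : Euc d} (hy : y ∈ N) : convEnv N u y ≤ u y := by
  refine csSup_le ⟨_, 0, sInf (u '' N), fun w hw => ?_, rfl⟩ ?_
  · simpa using csInf_le (hN.image u).bddBelow ⟨w, hw, rfl⟩
  · rintro _ ⟨p, c, hpc, rfl⟩
    exact hpc y hy

theorem bddBelow_convEnv_image : BddBelow (convEnv N u '' convexHull ℝ N) := by
  refine ⟨sInf (u '' N), ?_⟩
  rintro _ ⟨z, hz, rfl⟩
  have hL : ∀ y ∈ N, sInf (u '' N) + ⟪(0 : Euc d), y - z⟫ ≤ u y := fun y hy => by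
    simpa using csInf_le (hN.image u).bddBelow ⟨y, hy, rfl⟩
  simpa using le_convEnv hN hL hz

theorem mem_subdiff_convEnv_of_mem_subdiff {x p : Euc d} (hx : x ∈ N)
    (hp : p ∈ subdiff N u x) : p ∈ subdiff (convexHull ℝ N) (convEnv N u) x :=
  fun z hz => le_trans (by gcongr; exact convEnv_le hN hx) (le_convEnv hN hp hz)

theorem mem_subdiff_of_mem_subdiff_convEnv {y p : Euc d}
    (hyu : convEnv N u y = u y) (hp : p ∈ subdiff (convexHull ℝ N) (convEnv N u) y) :
    p ∈ subdiff N u y := fun w hw => by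
  rw [← hyu]
  exact (hp w (subset_convexHull ℝ N hw)).trans (convEnv_le hN hw)

theorem exists_mem_subdiff_convEnv_of_mem_subdiff {x p : Euc d} (hx : x ∈ convexHull ℝ N)
    (hp : p ∈ subdiff (convexHull ℝ N) (convEnv N u) x) :
    ∃ y ∈ N, convEnv N u y = u y ∧ p ∈ subdiff (convexHull ℝ N) (convEnv N u) y := by
  set Γ := convEnv N u
  set gap : Euc d → ℝ := fun y => u y - (Γ x + ⟪p, y - x⟫)
  obtain ⟨y, hy, hmin⟩ := exists_min_image N gap hN (convexHull_nonempty_iff.mp ⟨x, hx⟩)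
  have hgap_nonneg : ∀ w ∈ N, 0 ≤ gap w := fun w hw =>
    sub_nonneg.mpr ((hp w (subset_convexHull ℝ N hw)).trans (convEnv_le hN hw))
  have hgap_zero : gap y = 0 := by
    refine le_antisymm ?_ (hgap_nonneg y hy)
    have hL : ∀ w ∈ N, (Γ x + gap y) + ⟪p, w - x⟫ ≤ u w := fun w hw => by
      linarith [hmin w hw]
    have hΓx := le_convEnv hN hL hx
    simp only [sub_self, inner_zero_right, add_zero] at hΓx
    exact (add_le_iff_nonpos_right _).mp hΓx
  have hyu : Γ y = u y := le_antisymm (convEnv_le hN hy) (by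
    linarith [hp y (subset_convexHull ℝ N hy)])
  refine ⟨y, hy, hyu, fun z hz => ?_⟩
  have hpz := hp z hz
  have hyx : ⟪p, z - x⟫ = ⟪p, z - y⟫ + ⟪p, y - x⟫ := by
    rw [← inner_add_right, sub_add_sub_cancel]
  linarith

variable (E : Set (Euc d))

theorem subdiffSet_subset_subdiffSet_convEnv :
    subdiffSet N u (E ∩ N) ⊆ subdiffSet (convexHull ℝ N) (convEnv N u) E := by
  simp only [subdiffSet, iUnion_subset_iff]
  intro x hx p hp
  exact mem_biUnion hx.1 (mem_subdiff_convEnv_of_mem_subdiff hN hx.2 hp)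

theorem volume_subdiffSet_convEnv_diff (hE : E ⊆ convexHull ℝ N) :
    volume (subdiffSet (convexHull ℝ N) (convEnv N u) E \ subdiffSet N u (E ∩ N)) = 0 := by
  refine measure_mono_null ?_ (volume_setOf_mem_subdiff_of_ne
    (isBounded_convexHull.mpr hN.isBounded) (bddBelow_convEnv_image (u := u) hN))
  rintro p ⟨hpE, hpN⟩
  obtain ⟨x, hxE, hpx⟩ := mem_iUnion₂.mp hpE
  obtain ⟨y, hy, hyu, hpy⟩ := exists_mem_subdiff_convEnv_of_mem_subdiff hN (hE hxE) hpx
  refine ⟨x, hE hxE, y, subset_convexHull ℝ N hy, fun hxy => hpN ?_, hpx, hpy⟩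
  subst hxy
  exact mem_biUnion ⟨hxE, hy⟩ (mem_subdiff_of_mem_subdiff_convEnv hN hyu hpy)

end ConvexEnvelope

theorem interior_convexHull_subset_of_subset_closure {E : Type*} [NormedAddCommGroup E]
    [NormedSpace ℝ E] {Ω N : Set E} (hne : Ω.Nonempty) (hop : IsOpen Ω) (hcv : Convex ℝ Ω)
    (hN : N ⊆ closure Ω) : interior (convexHull ℝ N) ⊆ Ω :=
  calc interior (convexHull ℝ N) ⊆ interior (closure Ω) :=
        interior_mono (convexHull_min hN hcv.closure)
    _ = Ω := by
      rw [hcv.interior_closure_eq_interior_of_nonempty_interior (by rwa [hop.interior_eq]),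
        hop.interior_eq]

section Mesh

variable {d : ℕ} {Ω : Set (Euc d)} {h : ℝ}

theorem meshΩ_finite (hbd : Bornology.IsBounded Ω) (hh : 0 < h) : (meshΩ Ω h).Finite := by
  obtain ⟨C, hC⟩ := hbd.exists_norm_le
  set M : Fin d → ℤ := fun _ => ⌈C / h⌉
  refine ((finite_Icc (-M) M).image
    fun m : Fin d → ℤ => (WithLp.toLp 2 fun i => (m i : ℝ) * h : Euc d)).subset ?_
  rintro x ⟨hxΩ, hx⟩
  choose m hm using hx
  have hbound : ∀ i, |m i| ≤ M i := fun i => by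
    have hmi : |(m i : ℝ)| ≤ C / h := by
      rw [le_div_iff₀ hh, ← abs_of_pos hh, ← abs_mul, ← hm i]
      exact (PiLp.norm_apply_le x i).trans (hC x hxΩ)
    exact_mod_cast hmi.trans (Int.le_ceil _)
  exact ⟨m, ⟨fun i => neg_le_of_abs_le (hbound i), fun i => le_of_abs_le (hbound i)⟩,
    by ext i; exact (hm i).symm⟩

theorem inter_latt_eq_inter_nodes {B E : Set (Euc d)} (hop : IsOpen Ω)
    (hB : B ⊆ frontier Ω) (hE : E ⊆ Ω) : E ∩ latt d h = E ∩ (meshΩ Ω h ∪ B) := by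
  ext x
  constructor
  · rintro ⟨hxE, hx⟩
    exact ⟨hxE, Or.inl ⟨hE hxE, hx⟩⟩
  · rintro ⟨hxE, ⟨-, hx⟩ | hxB⟩
    · exact ⟨hxE, hx⟩
    · exact absurd (hE hxE) (hop.frontier_eq ▸ hB hxB).2

end Mesh

theorem statement7_general {d : ℕ} (Ω : Set (Euc d))
    (hne : Ω.Nonempty) (hbd : Bornology.IsBounded Ω) (hop : IsOpen Ω) (hcv : Convex ℝ Ω)
    (h : ℝ) (hh : 0 < h)
    (B : Set (Euc d)) (hBfin : B.Finite) (hBbd : B ⊆ frontier Ω)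
    (u : Euc d → ℝ)
    (E : Set (Euc d)) (hE : E ⊆ interior (convexHull ℝ (meshΩ Ω h ∪ B))) :
    (⋃ x ∈ E ∩ latt d h, subdiff (meshΩ Ω h ∪ B) u x) ⊆
      (⋃ x ∈ E, subdiff (convexHull ℝ (meshΩ Ω h ∪ B)) (convEnv (meshΩ Ω h ∪ B) u) x) ∧
    volume ((⋃ x ∈ E, subdiff (convexHull ℝ (meshΩ Ω h ∪ B)) (convEnv (meshΩ Ω h ∪ B) u) x) \
      (⋃ x ∈ E ∩ latt d h, subdiff (meshΩ Ω h ∪ B) u x)) = 0 ∧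
    ∀ R : Euc d → ℝ, (∀ p, 0 ≤ R p) → LocallyIntegrable R volume →
      (∫ p in (⋃ x ∈ E ∩ latt d h, subdiff (meshΩ Ω h ∪ B) u x), R p) =
      (∫ p in (⋃ x ∈ E, subdiff (convexHull ℝ (meshΩ Ω h ∪ B))
          (convEnv (meshΩ Ω h ∪ B) u) x), R p) := by
  have hN : (meshΩ Ω h ∪ B).Finite := (meshΩ_finite hbd hh).union hBfin
  have hNΩ : meshΩ Ω h ∪ B ⊆ closure Ω :=
    union_subset (inter_subset_left.trans subset_closure) (hBbd.trans frontier_subset_closure)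
  have hEΩ : E ⊆ Ω := hE.trans (interior_convexHull_subset_of_subset_closure hne hop hcv hNΩ)
  rw [inter_latt_eq_inter_nodes hop hBbd hEΩ]
  have hsub := subdiffSet_subset_subdiffSet_convEnv (u := u) hN E
  have hnull := volume_subdiffSet_convEnv_diff (u := u) hN E (hE.trans interior_subset)
  refine ⟨hsub, hnull, fun R _ _ => setIntegral_congr_set (ae_eq_set.mpr ⟨?_, hnull⟩)⟩
  exact measure_mono_null (sdiff_eq_empty.mpr hsub).le measure_empty

/-- for `E ⊆ interior (conv N_h)`, `∂_h u_h(E) ⊆ ∂Γ(u_h)(E)`, the difference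
`∂Γ(u_h)(E) \ ∂_h u_h(E)` is Lebesgue-null, and hence `ω(R,u_h,E) = ω(R,Γ(u_h),E)` for every
locally integrable `R ≥ 0`. -/
theorem statement7 {d : ℕ} (hd : 1 ≤ d) (Ω : Set (Euc d))
    (hne : Ω.Nonempty) (hbd : Bornology.IsBounded Ω) (hop : IsOpen Ω) (hcv : Convex ℝ Ω)
    (h : ℝ) (hh : 0 < h)
    (B : Set (Euc d)) (hBfin : B.Finite) (hBbd : B ⊆ frontier Ω)
    (u : Euc d → ℝ)
    (E : Set (Euc d)) (hE : E ⊆ interior (convexHull ℝ (meshΩ Ω h ∪ B))) :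
    (⋃ x ∈ E ∩ latt d h, subdiff (meshΩ Ω h ∪ B) u x) ⊆
      (⋃ x ∈ E, subdiff (convexHull ℝ (meshΩ Ω h ∪ B)) (convEnv (meshΩ Ω h ∪ B) u) x) ∧
    volume ((⋃ x ∈ E, subdiff (convexHull ℝ (meshΩ Ω h ∪ B)) (convEnv (meshΩ Ω h ∪ B) u) x) \
      (⋃ x ∈ E ∩ latt d h, subdiff (meshΩ Ω h ∪ B) u x)) = 0 ∧
    ∀ R : Euc d → ℝ, (∀ p, 0 ≤ R p) → LocallyIntegrable R volume →
      (∫ p in (⋃ x ∈ E ∩ latt d h, subdiff (meshΩ Ω h ∪ B) u x), R p) =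
      (∫ p in (⋃ x ∈ E, subdiff (convexHull ℝ (meshΩ Ω h ∪ B))
          (convEnv (meshΩ Ω h ∪ B) u) x), R p) :=
  statement7_general Ω hne hbd hop hcv h hh B hBfin hBbd u E hE

end
end

section
/- For any mesh function u_h, the d-dimensional Lebesgue measure of ⋃_{x ∈ Ω_h} ∂_h u_h(x) equals the sum over the finitely many x ∈ Ω_h of the Lebesgue measures of the sets ∂_h u_h(x); that is, ω(1,u_h,Ω_h) = Σ_{x ∈ Ω_h} |∂_h u_h(x)|. -/
open Set MeasureTheory Filter Topology

noncomputable section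

/-! At two distinct nodes `x ≠ y` the normal mappings can only share slopes `p` with
`⟪p, y - x⟫ = u y - u x`, a hyperplane and hence a Lebesgue-null set. So the normal mappings
over the nodes of `Ω_h` are almost disjoint, and there are finitely many of them because a
bounded set meets the lattice `hℤ^d` in finitely many points; measure is additive on such a
family. -/

theorem addHaar_preimage_singleton_eq_zero {E : Type*} [NormedAddCommGroup E] [NormedSpace ℝ E]
    [MeasurableSpace E] [BorelSpace E] [FiniteDimensional ℝ E] (μ : Measure E)
    [μ.IsAddHaarMeasure] {f : E →ₗ[ℝ] ℝ} (hf : f ≠ 0) (c : ℝ) : μ (f ⁻¹' {c}) = 0 := by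
  obtain ⟨x, hx⟩ : ∃ x, f x ≠ 0 := by simpa [LinearMap.ext_iff] using hf
  let s := (affineSpan ℝ {c}).comap f.toAffineMap
  have hs : s ≠ ⊤ := fun htop ↦ by
    have := (htop ▸ AffineSubspace.mem_top ℝ E (((c + 1) / f x) • x) : _ ∈ s)
    simp [s, AffineSubspace.mem_comap, AffineSubspace.mem_affineSpan_singleton, hx] at this
  simpa [s, AffineSubspace.coe_comap, AffineSubspace.coe_affineSpan_singleton] using
    Measure.addHaar_affineSubspace μ s hs

theorem volume_subdiff_inter_eq_zero {d : ℕ} {C : Set (Euc d)} (v : Euc d → ℝ) {x y : Euc d}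
    (hx : x ∈ C) (hy : y ∈ C) (hxy : x ≠ y) : volume (subdiff C v x ∩ subdiff C v y) = 0 := by
  have hne : innerₛₗ ℝ (y - x) ≠ 0 := fun h0 ↦ by
    have := congr($h0 (y - x))
    rw [innerₛₗ_apply_apply, LinearMap.zero_apply, inner_self_eq_zero, sub_eq_zero] at this
    exact hxy this.symm
  refine measure_mono_null ?_ (addHaar_preimage_singleton_eq_zero volume hne (v y - v x))
  rintro p ⟨hpx, hpy⟩
  have h1 := hpx y hy
  have h2 := hpy x hx
  rw [← neg_sub y x, inner_neg_right] at h2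
  simp only [mem_preimage, innerₛₗ_apply_apply, mem_singleton_iff, real_inner_comm]
  linarith

theorem isClosed_subdiff {d : ℕ} (C : Set (Euc d)) (v : Euc d → ℝ) (x : Euc d) :
    IsClosed (subdiff C v x) := by
  simp only [subdiff, ofPred_forall]
  exact isClosed_biInter fun y _ ↦ isClosed_le (by fun_prop) continuous_const

def lattBasis (d : ℕ) {h : ℝ} (hh : h ≠ 0) : Module.Basis (Fin d) ℝ (Euc d) :=
  (EuclideanSpace.basisFun (Fin d) ℝ).toBasis.isUnitSMul fun _ ↦ (Units.mk0 h hh).isUnit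

theorem latt_subset_span_lattBasis {d : ℕ} {h : ℝ} (hh : h ≠ 0) :
    latt d h ⊆ Submodule.span ℤ (range (lattBasis d hh)) := by
  intro x hx
  rw [SetLike.mem_coe, Module.Basis.mem_span_iff_repr_mem]
  intro i
  obtain ⟨m, hm⟩ := hx i
  refine ⟨m, ?_⟩
  simp only [lattBasis, algebraMap_int_eq, eq_intCast, Module.Basis.repr_isUnitSMul,
    OrthonormalBasis.coe_toBasis_repr_apply, EuclideanSpace.basisFun_repr, hm, Units.smul_def,
    Units.val_inv_eq_inv_val, IsUnit.unit_spec, Units.val_mk0, smul_eq_mul]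
  field_simp

theorem finite_inter_latt {d : ℕ} {s : Set (Euc d)} (hs : Bornology.IsBounded s) (h : ℝ) :
    (s ∩ latt d h).Finite := by
  rcases eq_or_ne h 0 with rfl | hh
  · refine (finite_singleton 0).subset fun x hx ↦ ?_
    ext i
    obtain ⟨m, hm⟩ := hx.2 i
    simpa using hm
  · exact (ZSpan.setFinite_inter _ hs).subset (inter_subset_inter_right _ (latt_subset_span_lattBasis hh))

theorem volume_biUnion_subdiff {d : ℕ} {C S : Set (Euc d)} (v : Euc d → ℝ) (hS : S.Countable)
    (hSC : S ⊆ C) :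
    volume (⋃ x ∈ S, subdiff C v x) = ∑' x : S, volume (subdiff C v x) :=
  measure_biUnion₀ hS
    (fun _ hx _ hy hxy ↦ volume_subdiff_inter_eq_zero v (hSC hx) (hSC hy) hxy)
    fun x _ ↦ (isClosed_subdiff C v x).measurableSet.nullMeasurableSet

theorem statement8_general {d : ℕ} (Ω : Set (Euc d)) (hbd : Bornology.IsBounded Ω) (h : ℝ)
    (B : Set (Euc d)) (u : Euc d → ℝ) :
    (meshΩ Ω h).Finite ∧
    volume (⋃ x ∈ meshΩ Ω h, subdiff (meshΩ Ω h ∪ B) u x) =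
      ∑' x : (meshΩ Ω h), volume (subdiff (meshΩ Ω h ∪ B) u (x : Euc d)) := by
  have hfin : (meshΩ Ω h).Finite := finite_inter_latt hbd h
  exact ⟨hfin, volume_biUnion_subdiff u hfin.countable subset_union_left⟩

/-- `Ω_h` is finite and the Monge–Ampère mass `ω(1,u_h,Ω_h)`, i.e. the Lebesgue
measure of `⋃ x ∈ Ω_h, ∂_h u_h(x)`, equals the sum of the measures `|∂_h u_h(x)|`. -/
theorem statement8 {d : ℕ} (hd : 1 ≤ d) (Ω : Set (Euc d))
    (hne : Ω.Nonempty) (hbd : Bornology.IsBounded Ω) (hop : IsOpen Ω) (hcv : Convex ℝ Ω)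
    (h : ℝ) (hh : 0 < h)
    (B : Set (Euc d)) (hBfin : B.Finite) (hBbd : B ⊆ frontier Ω)
    (u : Euc d → ℝ) :
    (meshΩ Ω h).Finite ∧
    volume (⋃ x ∈ meshΩ Ω h, subdiff (meshΩ Ω h ∪ B) u x) =
      ∑' x : (meshΩ Ω h), volume (subdiff (meshΩ Ω h ∪ B) u (x : Euc d)) :=
  statement8_general Ω hbd h B u

end
end
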